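/- Let X• be a simplicial set (or the underlying simplicial set of a simplicial space), and let I and J be distinct admissible sequences with |I| = |J| = r ≤ n. Then s_I(X_{n−r}) ∩ s_J(X_{n−r}) ⊆ S^{r+1}(X_n); that is, any n-simplex lying in the image of both s_I and s_J is an (r+1)-fold degenerate simplex. -/

import Mathlib

universe u v

/-- An NDR pair `(Z, A)`, in the sense of May. -/
def IsNDRPair {Z : Type u} [TopologicalSpace Z] (A : Set Z) : Prop :=
  ∃ (u : C(Z, unitInterval)) (h : C(Z × unitInterval, Z)),
    A = u ⁻¹' {0} ∧ (∀ z, h (z, 0) = z) ∧ (∀ a ∈ A, ∀ t, h (a, t) ∈ A) ∧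
    ∀ z, u z < 1 → h (z, 1) ∈ A

/-- A strong NDR pair `(Z, A)`, in the sense of May. -/
def IsStrongNDRPair {Z : Type u} [TopologicalSpace Z] (A : Set Z) : Prop :=
  ∃ (u : C(Z, unitInterval)) (h : C(Z × unitInterval, Z)),
    A = u ⁻¹' {0} ∧ (∀ z, h (z, 0) = z) ∧ (∀ a ∈ A, ∀ t, h (a, t) ∈ A) ∧
    (∀ z, u z < 1 → h (z, 1) ∈ A) ∧ ∀ z t, u z < 1 → u (h (z, t)) < 1

/-- A cofibration: a map having the homotopy extension property with respect to all spaces. -/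
def IsCofibration {A X : Type u} [TopologicalSpace A] [TopologicalSpace X] (i : C(A, X)) : Prop :=
  ∀ (Z : Type u) [TopologicalSpace Z] (f : C(X, Z)) (H : C(A × unitInterval, Z)),
    (∀ a, H (a, 0) = f (i a)) →
    ∃ G : C(X × unitInterval, Z), (∀ x, G (x, 0) = f x) ∧ ∀ a t, G (i a, t) = H (a, t)

/-- `f` is a homotopy equivalence. -/
def IsHtpyEquiv {A : Type u} {B : Type v} [TopologicalSpace A] [TopologicalSpace B]
    (f : C(A, B)) : Prop :=
  ∃ g : C(B, A), (g.comp f).Homotopic (ContinuousMap.id A) ∧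
    (f.comp g).Homotopic (ContinuousMap.id B)

/-- A pointed topological space. -/
structure PSpace : Type (u + 1) where
  carrier : Type u
  top : TopologicalSpace carrier
  pt : carrier

attribute [instance] PSpace.top

/-- Points of `Z ⊕ *` which get identified when collapsing `A ⊆ Z`. -/
def collapseGood {Z : Type u} (A : Set Z) : Z ⊕ Unit → Prop :=
  Sum.elim (· ∈ A) fun _ => True

/-- The setoid on `Z ⊕ *` which identifies all points of `A` with the added point. -/
def collapseSetoid {Z : Type u} (A : Set Z) : Setoid (Z ⊕ Unit) where
  r x y := x = y ∨ (collapseGood A x ∧ collapseGood A y)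
  iseqv := by
    constructor
    · exact fun x => Or.inl rfl
    · rintro x y (rfl | ⟨h1, h2⟩)
      · exact Or.inl rfl
      · exact Or.inr ⟨h2, h1⟩
    · rintro x y z (rfl | ⟨h1, h2⟩) h
      · exact h
      · rcases h with rfl | ⟨h3, h4⟩
        · exact Or.inr ⟨h1, h2⟩
        · exact Or.inr ⟨h1, h4⟩

/-- The pointed quotient `Z/A`: the quotient of `Z ⊔ *` identifying all of `A ∪ {*}` to a
single point, which serves as basepoint.  (When `A = ∅` this is `Z` with a disjoint
basepoint added.) -/
def Collapse {Z : Type u} [TopologicalSpace Z] (A : Set Z) : PSpace.{u} where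
  carrier := Quotient (collapseSetoid A)
  top := instTopologicalSpaceQuotient
  pt := Quotient.mk _ (Sum.inr ())

/-- The canonical map `Z → Z/A`. -/
def Collapse.mk {Z : Type u} [TopologicalSpace Z] (A : Set Z) (z : Z) : (Collapse A).carrier :=
  Quotient.mk _ (Sum.inl z)

/-- `Z` with a disjoint basepoint added. -/
def plusP (Z : Type u) [TopologicalSpace Z] : PSpace.{u} := Collapse (∅ : Set Z)

/-- The reduced suspension of a pointed space. -/
def Susp (P : PSpace.{u}) : PSpace.{u} :=
  Collapse {q : P.carrier × unitInterval | q.2 = 0 ∨ q.2 = 1 ∨ q.1 = P.pt}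

/-- The canonical map `P × [0,1] → Σ P`. -/
def Susp.mk (P : PSpace.{u}) (z : P.carrier) (t : unitInterval) : (Susp P).carrier :=
  Collapse.mk _ (z, t)

/-- The wedge (one point union) of a family of pointed spaces. -/
def Wedge {ι : Type v} (P : ι → PSpace.{u}) : PSpace.{max u v} :=
  Collapse {x : Σ i, (P i).carrier | x.2 = (P x.1).pt}

/-- The canonical map from a summand into the wedge. -/
def Wedge.mk {ι : Type v} (P : ι → PSpace.{u}) (i : ι) (z : (P i).carrier) :
    (Wedge P).carrier :=
  Collapse.mk _ ⟨i, z⟩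

/-- `G` is the map of suspensions induced by the pointed map `g`. -/
def SuspExtends {P Q : PSpace.{u}} (g : P.carrier → Q.carrier)
    (G : (Susp P).carrier → (Susp Q).carrier) : Prop :=
  (∀ z t, G (Susp.mk P z t) = Susp.mk Q (g z) t) ∧ G (Susp P).pt = (Susp Q).pt

/-- `G` is the map of `j`-fold suspensions induced by the map `g`. -/
def SuspIterExtends : (j : ℕ) → (P Q : PSpace.{u}) → (P.carrier → Q.carrier) →
    ((Susp^[j] P).carrier → (Susp^[j] Q).carrier) → Prop
  | 0, _, _, g, G => G = g
  | j + 1, P, Q, g, G =>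
      ∃ g' : (Susp P).carrier → (Susp Q).carrier,
        SuspExtends g g' ∧ SuspIterExtends j (Susp P) (Susp Q) g' G

/-- `G` is the map of wedges induced by the family of maps `g i`. -/
def WedgeInduced {ι : Type v} (P Q : ι → PSpace.{u}) (g : ∀ i, (P i).carrier → (Q i).carrier)
    (G : (Wedge P).carrier → (Wedge Q).carrier) : Prop :=
  (∀ i z, G (Wedge.mk P i z) = Wedge.mk Q i (g i z)) ∧ G (Wedge P).pt = (Wedge Q).pt

/-- `g` is the map of collapses induced by `f : Z → W`. -/
def CollapseInduced {Z : Type u} {W : Type v} [TopologicalSpace Z] [TopologicalSpace W]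
    (A : Set Z) (B : Set W) (f : Z → W)
    (g : (Collapse A).carrier → (Collapse B).carrier) : Prop :=
  (∀ z, g (Collapse.mk A z) = Collapse.mk B (f z)) ∧ g (Collapse A).pt = (Collapse B).pt

/-- A simplicial space: a sequence of topological spaces with continuous face and
degeneracy maps satisfying the simplicial identities.  The maps `d n i : X (n+1) → X n`
and `s n i : X n → X (n+1)` carry ℕ-valued indices; only the values with
`i ≤ n + 1` (resp. `i ≤ n`) are meaningful, and the simplicial identities are imposed
exactly in that range. -/
structure SimplicialSpace : Type (u + 1) where
  X : ℕ → Type u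
  top : ∀ n, TopologicalSpace (X n)
  d : ∀ n, ℕ → X (n + 1) → X n
  s : ∀ n, ℕ → X n → X (n + 1)
  continuous_d : ∀ n i, Continuous (d n i)
  continuous_s : ∀ n i, Continuous (s n i)
  dd : ∀ n i j, i < j → j ≤ n + 2 → ∀ x, d n i (d (n + 1) j x) = d n (j - 1) (d (n + 1) i x)
  ss : ∀ n i j, i ≤ j → j ≤ n → ∀ x, s (n + 1) i (s n j x) = s (n + 1) (j + 1) (s n i x)
  ds_lt : ∀ n i j, i < j → j ≤ n + 1 → ∀ x,
    d (n + 1) i (s (n + 1) j x) = s n (j - 1) (d n i x)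
  ds_eq : ∀ n j, j ≤ n → ∀ x, d n j (s n j x) = x
  ds_eq' : ∀ n j, j ≤ n → ∀ x, d n (j + 1) (s n j x) = x
  ds_gt : ∀ n i j, j + 1 < i → i ≤ n + 2 → ∀ x,
    d (n + 1) i (s (n + 1) j x) = s n j (d n (i - 1) x)

attribute [instance] SimplicialSpace.top

namespace SimplicialSpace

/-- A morphism of simplicial spaces. -/
structure Hom (X Y : SimplicialSpace.{u}) : Type u where
  f : ∀ n, X.X n → Y.X n
  continuous_f : ∀ n, Continuous (f n)
  comm_d : ∀ n i, i ≤ n + 1 → ∀ x, f n (X.d n i x) = Y.d n i (f (n + 1) x)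
  comm_s : ∀ n i, i ≤ n → ∀ x, f (n + 1) (X.s n i x) = Y.s n i (f n x)

/-- For a sequence `I = (i_r, …, i_1)` (as the list `[i_r, …, i_1]`), the composite
degeneracy `s_I = s_{i_r} ∘ ⋯ ∘ s_{i_1} : X_m → X_{m + r}`. -/
def sComp (X : SimplicialSpace.{u}) : (I : List ℕ) → (m : ℕ) → X.X m → X.X (m + I.length)
  | [], _, y => y
  | i :: I', m, y => X.s (m + I'.length) i (sComp X I' m y)

/-- For a sequence `I = (i_r, …, i_1)` (as the list `[i_r, …, i_1]`), the composite
face map `d_{χ(I)} = d_{i_1} ∘ d_{i_2} ∘ ⋯ ∘ d_{i_r} : X_{m+r} → X_m` (so `d_{i_r}` is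
applied first). -/
def dComp (X : SimplicialSpace.{u}) : (I : List ℕ) → (m : ℕ) → X.X (m + I.length) → X.X m
  | [], _, x => x
  | i :: I', m, x => dComp X I' m (X.d (m + I'.length) i x)

/-- The sequence `I = (i_r, …, i_1)` consists of indices which are in range for the
composite degeneracy `s_I : X_m → X_{m+r}`. -/
def ValidSeq : List ℕ → ℕ → Prop
  | [], _ => True
  | i :: I', m => i ≤ m + I'.length ∧ ValidSeq I' m

/-- The decreasing degeneracy filtration: `filtS X t n` is the subspace
`S^t(X_n) ⊆ X_n`, the union of the images of all `t`-fold composites of degeneracy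
maps.  (`S^0(X_n) = X_n`.) -/
def filtS (X : SimplicialSpace.{u}) : (t : ℕ) → (n : ℕ) → Set (X.X n)
  | 0, _ => Set.univ
  | t + 1, n => {x | ∃ (m : ℕ) (hm : m + 1 = n) (i : ℕ), i ≤ m ∧
      ∃ y ∈ filtS X t m, cast (congrArg X.X hm) (X.s m i y) = x}

lemma filtS_succ_subset (X : SimplicialSpace.{u}) :
    ∀ (t n : ℕ), X.filtS (t + 1) n ⊆ X.filtS t n := by
  intro t
  induction t with
  | zero => intro n x _; exact Set.mem_univ x
  | succ t ih =>
      rintro n x ⟨m, rfl, i, hi, y, hy, rfl⟩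
      exact ⟨m, rfl, i, hi, y, ih m hy, rfl⟩

lemma filtS_antitone (X : SimplicialSpace.{u}) {t t' : ℕ} (h : t ≤ t') (n : ℕ) :
    X.filtS t' n ⊆ X.filtS t n := by
  induction h with
  | refl => exact fun x hx => hx
  | step _ ih => exact fun x hx => ih (X.filtS_succ_subset _ n hx)

end SimplicialSpace
namespace SimplicialSpace

/-- The composite degeneracy `s_I`, regarded as a map `X_{n - r} → X_n` where `r = |I|`. -/
def sFromTo (X : SimplicialSpace.{u}) (I : List ℕ) (n : ℕ) (h : I.length ≤ n) :
    X.X (n - I.length) → X.X n :=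
  fun y => cast (congrArg X.X (Nat.sub_add_cancel h)) (X.sComp I (n - I.length) y)

/-- The composite face map `d_{χ(I)}`, regarded as a map `X_n → X_{n - r}` where `r = |I|`. -/
def dFromTo (X : SimplicialSpace.{u}) (I : List ℕ) (n : ℕ) (h : I.length ≤ n) :
    X.X n → X.X (n - I.length) :=
  fun x => X.dComp I (n - I.length) (cast (congrArg X.X (Nat.sub_add_cancel h).symm) x)

/-- The image `s_I(X_{n-r}) ⊆ X_n`. -/
def sImage (X : SimplicialSpace.{u}) (I : List ℕ) (n : ℕ) (h : I.length ≤ n) : Set (X.X n) :=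
  Set.range (X.sFromTo I n h)

/-- The pointed space `ŝ_I(X_{n-r}) = s_I(X_{n-r}) / s_I S(X_{n-r})`. -/
def sHat (X : SimplicialSpace.{u}) (I : List ℕ) (n : ℕ) (h : I.length ≤ n) : PSpace.{u} :=
  Collapse {x : ↥(X.sImage I n h) |
    (x : X.X n) ∈ X.sFromTo I n h '' X.filtS 1 (n - I.length)}

/-- The pointed filtration quotient `S^r(X_n)/S^{r+1}(X_n)`. -/
def filtQuot (X : SimplicialSpace.{u}) (n r : ℕ) : PSpace.{u} :=
  Collapse {x : ↥(X.filtS r n) | (x : X.X n) ∈ X.filtS (r + 1) n}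

/-- `X` is simplicially NDR: each pair `(S^t(X_n), S^{t+1}(X_n))` is an NDR pair. -/
def SimpliciallyNDR (X : SimplicialSpace.{u}) : Prop :=
  ∀ n t, IsNDRPair {x : ↥(X.filtS t n) | (x : X.X n) ∈ X.filtS (t + 1) n}

/-- `X` is proper: each pair `(X_n, S(X_n))` is a strong NDR pair. -/
def Proper (X : SimplicialSpace.{u}) : Prop := ∀ n, IsStrongNDRPair (X.filtS 1 n)

/-- `g` is the map `S^r(X_n)/S^{r+1}(X_n) → S^r(Y_n)/S^{r+1}(Y_n)` induced by the
morphism `f : X → Y` of simplicial spaces. -/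
def FiltQuotInduced {X Y : SimplicialSpace.{u}} (f : X.Hom Y) (n r : ℕ)
    (g : (X.filtQuot n r).carrier → (Y.filtQuot n r).carrier) : Prop :=
  (∀ (x : X.X n) (hx : x ∈ X.filtS r n) (hfx : f.f n x ∈ Y.filtS r n),
      g (Collapse.mk _ ⟨x, hx⟩) = Collapse.mk _ ⟨f.f n x, hfx⟩) ∧
  g (X.filtQuot n r).pt = (Y.filtQuot n r).pt

/-- `g` is the map `ŝ_I(X_{n-r}) → ŝ_I(Y_{n-r})` induced by the morphism `f : X → Y`. -/
def SHatInduced {X Y : SimplicialSpace.{u}} (f : X.Hom Y) (I : List ℕ) (n : ℕ)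
    (h : I.length ≤ n)
    (g : (X.sHat I n h).carrier → (Y.sHat I n h).carrier) : Prop :=
  (∀ y : X.X (n - I.length),
      g (Collapse.mk _ ⟨X.sFromTo I n h y, Set.mem_range_self y⟩) =
        Collapse.mk _ ⟨Y.sFromTo I n h (f.f (n - I.length) y), Set.mem_range_self _⟩) ∧
  g (X.sHat I n h).pt = (Y.sHat I n h).pt

end SimplicialSpace

/-- Admissible sequences `(j_r > j_{r-1} > ⋯ > j_1)` of length `r` with entries `< b`,
encoded as strictly decreasing lists. -/
def AdmSeq (r b : ℕ) : Type :=
  {J : List ℕ // J.length = r ∧ J.Pairwise (· > ·) ∧ ∀ i ∈ J, i < b}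

/-- Strict lexicographic order on sequences of equal length (comparing from the left,
i.e. at the largest entries first): `I < J` iff they agree above position `p` and
`i_p < j_p`. -/
def SeqLexLT : List ℕ → List ℕ → Prop
  | _, [] => False
  | [], _ :: _ => False
  | i :: I', j :: J' => i < j ∨ (i = j ∧ SeqLexLT I' J')
namespace SimplexCategory

/-- The topological simplex associated to `x : SimplexCategory` (the definition removed
from Mathlib, restored with its old meaning). -/
def toTopObj (x : SimplexCategory) :=
  { f : Fin (x.len + 1) → NNReal | ∑ i, f i = 1 }

/-- A morphism in `SimplexCategory` induces a map on the associated topological spaces. -/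
def toTopMap {x y : SimplexCategory} (f : x ⟶ y) (g : x.toTopObj) : y.toTopObj :=
  ⟨fun i => ∑ j ∈ Finset.univ.filter (f.toOrderHom · = i), g.1 j, by
    show ∑ i, ∑ j ∈ Finset.univ.filter (f.toOrderHom · = i), g.1 j = 1
    rw [Finset.sum_fiberwise Finset.univ (fun j => f.toOrderHom j) g.1]
    exact g.2⟩

end SimplexCategory

/-- The topological standard `n`-simplex. -/
abbrev TopSimplex (n : ℕ) : Type :=
  ↥(SimplexCategory.toTopObj (SimplexCategory.mk n))

namespace SimplicialSpace

/-- The disjoint union `⊔ₙ Xₙ × Δⁿ` from which the geometric realization is formed. -/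
def RealPre (X : SimplicialSpace.{u}) : Type u :=
  Σ n : ℕ, X.X n × TopSimplex n

instance (X : SimplicialSpace.{u}) : TopologicalSpace (RealPre X) := by
  unfold RealPre; infer_instance

/-- The identifications defining the geometric realization: `(d_i x, u) ∼ (x, δ^i u)`
and `(s_i x, u) ∼ (x, σ^i u)`. -/
inductive RealRel (X : SimplicialSpace.{u}) : RealPre X → RealPre X → Prop
  | face (n i : ℕ) (hi : i ≤ n + 1) (x : X.X (n + 1)) (u : TopSimplex n) :
      RealRel X ⟨n, (X.d n i x, u)⟩
        ⟨n + 1, (x, SimplexCategory.toTopMap (SimplexCategory.δ ⟨i, by omega⟩) u)⟩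
  | degen (n i : ℕ) (hi : i ≤ n) (x : X.X n) (u : TopSimplex (n + 1)) :
      RealRel X ⟨n + 1, (X.s n i x, u)⟩
        ⟨n, (x, SimplexCategory.toTopMap (SimplexCategory.σ ⟨i, by omega⟩) u)⟩

/-- The geometric realization `|X|` of a simplicial space. -/
def Realization (X : SimplicialSpace.{u}) : Type u := Quot (RealRel X)

instance (X : SimplicialSpace.{u}) : TopologicalSpace (Realization X) := by
  unfold Realization; infer_instance

/-- The subset of `|X|` of points represented by simplices of dimension `< j`
(so `FleBelow X 0 = ∅` and `FleBelow X (j+1) = F_j|X|`). -/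
def FleBelow (X : SimplicialSpace.{u}) (j : ℕ) : Set (Realization X) :=
  {q | ∃ (n : ℕ), n < j ∧ ∃ (x : X.X n) (u : TopSimplex n), q = Quot.mk _ ⟨n, (x, u)⟩}

/-- The skeletal filtration `F_j|X|` of the geometric realization. -/
def Fle (X : SimplicialSpace.{u}) (j : ℕ) : Set (Realization X) := FleBelow X (j + 1)

/-- The pointed filtration quotient `F_j|X| / F_{j-1}|X|` (for `j = 0` this is
`F_0|X|` with a disjoint basepoint added). -/
def realQuot (X : SimplicialSpace.{u}) (j : ℕ) : PSpace.{u} :=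
  Collapse {q : ↥(Fle X j) | (q : Realization X) ∈ FleBelow X j}

/-- `g` is the map `|X| → |Y|` induced by a morphism `f : X → Y` of simplicial spaces. -/
def RealMapInduced {X Y : SimplicialSpace.{u}} (f : X.Hom Y)
    (g : Realization X → Realization Y) : Prop :=
  ∀ (n : ℕ) (x : X.X n) (u : TopSimplex n),
    g (Quot.mk _ ⟨n, (x, u)⟩) = Quot.mk _ ⟨n, (f.f n x, u)⟩

/-- `g` is the map `F_j|X|/F_{j-1}|X| → F_j|Y|/F_{j-1}|Y|` induced by a morphism
`f : X → Y` of simplicial spaces. -/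
def RealQuotInduced {X Y : SimplicialSpace.{u}} (f : X.Hom Y) (j : ℕ)
    (g : (realQuot X j).carrier → (realQuot Y j).carrier) : Prop :=
  ∃ g0 : Realization X → Realization Y, RealMapInduced f g0 ∧
    ∃ hg0 : ∀ q ∈ Fle X j, g0 q ∈ Fle Y j,
      (∀ (q : Realization X) (hq : q ∈ Fle X j),
        g (Collapse.mk _ ⟨q, hq⟩) = Collapse.mk _ ⟨g0 q, hg0 q hq⟩) ∧
      g (realQuot X j).pt = (realQuot Y j).pt

end SimplicialSpace

/-- The mapping cone of a map `f : A → X`: the quotient of `X ⊔ (A × [0,1])` obtained by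
identifying `(a, 0)` with `f a` and collapsing `A × {1}` to a point. -/
inductive ConeRel {A X : Type u} [TopologicalSpace A] [TopologicalSpace X] (f : A → X) :
    (X ⊕ (A × unitInterval)) → (X ⊕ (A × unitInterval)) → Prop
  | glue (a : A) : ConeRel f (Sum.inr (a, 0)) (Sum.inl (f a))
  | tip (a b : A) : ConeRel f (Sum.inr (a, 1)) (Sum.inr (b, 1))

/-- The mapping cone of `f : A → X`. -/
def MappingCone {A X : Type u} [TopologicalSpace A] [TopologicalSpace X] (f : A → X) :
    Type u :=
  Quot (ConeRel f)

instance {A X : Type u} [TopologicalSpace A] [TopologicalSpace X] (f : A → X) :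
    TopologicalSpace (MappingCone f) := by
  unfold MappingCone; infer_instance
/-- An abstract simplicial complex on the vertex set `{1, …, m}` (encoded as `Fin m`):
a collection of finite subsets closed under taking subsets. -/
structure AbsSimplicialComplex (m : ℕ) : Type where
  faces : Set (Finset (Fin m))
  down_closed : ∀ σ ∈ faces, ∀ τ ⊆ σ, τ ∈ faces

/-- The `n`-simplices of the simplicial set `Δ(K)`: weakly order-preserving
`(n+1)`-tuples of vertices whose underlying set is a simplex of `K`. -/
def DeltaObj {m : ℕ} (K : AbsSimplicialComplex m) (n : ℕ) : Type :=
  {v : Fin (n + 1) → Fin m // Monotone v ∧ Finset.image v Finset.univ ∈ K.faces}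

/-- The coface index map `δ_i : [n] → [n+1]` (with out-of-range `i` clamped). -/
def dIdx (n i : ℕ) (k : Fin (n + 1)) : Fin (n + 2) :=
  ⟨if k.1 < i then k.1 else k.1 + 1, by have := k.isLt; split_ifs <;> omega⟩

/-- The codegeneracy index map `σ_i : [n+1] → [n]` (with out-of-range `i` clamped). -/
def sIdx (n i : ℕ) (k : Fin (n + 2)) : Fin (n + 1) :=
  ⟨if k.1 ≤ min i n then k.1 else k.1 - 1, by
    have := k.isLt; have := Nat.min_le_right i n; split_ifs <;> omega⟩

/-- The simplicial set `Δ(K)` associated to an abstract simplicial complex `K`,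
regarded as a simplicial space in which every space is discrete. -/
def DeltaK {m : ℕ} (K : AbsSimplicialComplex m) : SimplicialSpace.{0} where
  X n := DeltaObj K n
  top _ := ⊥
  d n i v := ⟨fun k => v.1 (dIdx n i k),
    fun a b hab => v.2.1 (by
      simp only [dIdx, Fin.mk_le_mk]
      have := Fin.le_def.mp hab
      split_ifs <;> omega),
    K.down_closed _ v.2.2 _ (Finset.image_subset_iff.mpr fun k _ =>
      Finset.mem_image_of_mem _ (Finset.mem_univ _))⟩
  s n i v := ⟨fun k => v.1 (sIdx n i k),
    fun a b hab => v.2.1 (by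
      simp only [sIdx, Fin.mk_le_mk]
      have := Fin.le_def.mp hab
      split_ifs <;> omega),
    K.down_closed _ v.2.2 _ (Finset.image_subset_iff.mpr fun k _ =>
      Finset.mem_image_of_mem _ (Finset.mem_univ _))⟩
  continuous_d _ _ := continuous_bot
  continuous_s _ _ := continuous_bot
  dd n i j hij hj x := by
    apply Subtype.ext; funext k
    refine congrArg x.1 (Fin.ext ?_)
    simp [dIdx]
    have := k.isLt
    split_ifs <;> omega
  ss n i j hij hj x := by
    apply Subtype.ext; funext k
    refine congrArg x.1 (Fin.ext ?_)
    simp [sIdx]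
    have := k.isLt
    split_ifs <;> omega
  ds_lt n i j hij hj x := by
    apply Subtype.ext; funext k
    refine congrArg x.1 (Fin.ext ?_)
    simp [dIdx, sIdx]
    have := k.isLt
    split_ifs <;> omega
  ds_eq n j hj x := by
    apply Subtype.ext; funext k
    refine congrArg x.1 (Fin.ext ?_)
    simp [dIdx, sIdx]
    have := k.isLt
    split_ifs <;> omega
  ds_eq' n j hj x := by
    apply Subtype.ext; funext k
    refine congrArg x.1 (Fin.ext ?_)
    simp [dIdx, sIdx]
    have := k.isLt
    split_ifs <;> omega
  ds_gt n i j hij hi x := by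
    apply Subtype.ext; funext k
    refine congrArg x.1 (Fin.ext ?_)
    simp [dIdx, sIdx]
    have := k.isLt
    split_ifs <;> omega

/-- The geometric realization (polyhedron) `|K|` of an abstract simplicial complex on
`{1, …, m}`: the set of convex weightings of the vertices whose support lies in a
simplex of `K`, topologized as a subspace of `ℝ^m`. -/
def geomRealSC {m : ℕ} (K : AbsSimplicialComplex m) : Type :=
  {w : Fin m → ℝ // (∀ i, 0 ≤ w i) ∧ (∑ i, w i) = 1 ∧
    ∃ σ ∈ K.faces, ∀ i, w i ≠ 0 → i ∈ σ}

instance {m : ℕ} (K : AbsSimplicialComplex m) : TopologicalSpace (geomRealSC K) := by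
  unfold geomRealSC; infer_instance

/-! Induct on the common length, peeling off the top degeneracies `s_a` of `I` and `s_b` of
`J`. If `a = b`, then `d_a` recovers the same simplex from both sides and we recurse. If
`b < a`, the simplex `x = s_a u` is recovered as `s_a (d_{a+1} x)`; since every entry of `J`
lies below `a`, the face `d_{a+1}` slides through `s_J`, so `d_{a+1} x` is still in the image of
`s_J` and `x` lies in the image of the admissible composite `s_a s_J` of length `r + 1`. -/

namespace SimplicialSpace

variable (X : SimplicialSpace.{u})

/-- `x` lies in the image of `s_I`; unlike `Set.range (X.sFromTo I n h)`, no transport along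
`n - |I| + |I| = n` is involved. -/
def MemSImage : List ℕ → (n : ℕ) → X.X n → Prop
  | [], _, _ => True
  | _ :: _, 0, _ => False
  | i :: I, n + 1, x => ∃ w, MemSImage I n w ∧ X.s n i w = x

theorem memSImage_sComp (I : List ℕ) (m : ℕ) (y : X.X m) :
    X.MemSImage I (m + I.length) (X.sComp I m y) := by
  induction I with
  | nil => trivial
  | cons i I ih => exact ⟨_, ih, rfl⟩

theorem memSImage_cast {I : List ℕ} {m n : ℕ} (e : m = n) (x : X.X m) :
    X.MemSImage I n (cast (congrArg X.X e) x) ↔ X.MemSImage I m x := by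
  subst e
  rfl

theorem memSImage_of_mem_range_sFromTo {I : List ℕ} {n : ℕ} {h : I.length ≤ n} {x : X.X n}
    (hx : x ∈ Set.range (X.sFromTo I n h)) : X.MemSImage I n x := by
  obtain ⟨y, rfl⟩ := hx
  exact (X.memSImage_cast (Nat.sub_add_cancel h) _).mpr (X.memSImage_sComp I _ y)

theorem mem_filtS_of_memSImage {I : List ℕ} (hI : I.Pairwise (· > ·)) :
    ∀ {n : ℕ} {x : X.X n}, (∀ i ∈ I, i < n) → X.MemSImage I n x →
      x ∈ X.filtS I.length n := by
  induction I with
  | nil => exact fun _ _ => Set.mem_univ _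
  | cons a I ih =>
    rintro (_ | m) x hIn hx
    · exact hx.elim
    obtain ⟨w, hw, rfl⟩ := hx
    have ha := hIn a List.mem_cons_self
    have hIa : ∀ i ∈ I, i < m := fun i hi =>
      lt_of_lt_of_le (List.rel_of_pairwise_cons hI hi) (Nat.lt_succ_iff.mp ha)
    exact ⟨m, rfl, a, Nat.lt_succ_iff.mp ha, w, ih hI.of_cons hIa hw, rfl⟩

theorem memSImage_d_of_lt {J : List ℕ} (hJ : J.Pairwise (· > ·)) :
    ∀ {n c : ℕ} {x : X.X (n + 1)}, (∀ j ∈ J, j + 1 < c) → c ≤ n + 1 →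
      X.MemSImage J (n + 1) x → X.MemSImage J n (X.d n c x) := by
  induction J with
  | nil => exact fun _ _ _ => trivial
  | cons j J ih =>
    rintro (_ | n) c x hJc hc ⟨w, hw, rfl⟩
    all_goals have hj := hJc j List.mem_cons_self
    · omega
    rw [X.ds_gt n c j hj hc w]
    refine ⟨_, ih hJ.of_cons (fun j' hj' => ?_) (by omega) hw, rfl⟩
    have := List.rel_of_pairwise_cons hJ hj'
    omega

theorem memSImage_cons_of_lt {J : List ℕ} (hJ : J.Pairwise (· > ·)) {m a : ℕ}
    (hJa : ∀ j ∈ J, j < a) (ha : a ≤ m) {u : X.X m}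
    (hx : X.MemSImage J (m + 1) (X.s m a u)) : X.MemSImage (a :: J) (m + 1) (X.s m a u) := by
  have hdx := X.memSImage_d_of_lt hJ (c := a + 1) (fun j hj => by have := hJa j hj; omega)
    (by omega) hx
  rw [X.ds_eq' m a ha u] at hdx
  exact ⟨u, hdx, rfl⟩

theorem mem_filtS_of_memSImage_of_lt {J : List ℕ} (hJ : J.Pairwise (· > ·)) {m a : ℕ}
    (hJa : ∀ j ∈ J, j < a) (ha : a ≤ m) {u : X.X m}
    (hx : X.MemSImage J (m + 1) (X.s m a u)) : X.s m a u ∈ X.filtS (J.length + 1) (m + 1) :=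
  X.mem_filtS_of_memSImage (List.pairwise_cons.mpr ⟨hJa, hJ⟩)
    (List.forall_mem_cons.mpr ⟨by omega, fun j hj => by have := hJa j hj; omega⟩)
    (X.memSImage_cons_of_lt hJ hJa ha hx)

theorem mem_filtS_of_memSImage_of_memSImage {I J : List ℕ} (hlen : I.length = J.length)
    (hI : I.Pairwise (· > ·)) (hJ : J.Pairwise (· > ·)) (hIJ : I ≠ J) :
    ∀ {n : ℕ} {x : X.X n}, (∀ i ∈ I, i < n) → (∀ j ∈ J, j < n) →
      X.MemSImage I n x → X.MemSImage J n x → x ∈ X.filtS (I.length + 1) n := by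
  induction I generalizing J with
  | nil => exact absurd (List.length_eq_zero_iff.mp hlen.symm).symm hIJ
  | cons a I ih =>
    obtain _ | ⟨b, J⟩ := J
    · simp at hlen
    rintro (_ | m) x hIn hJn hxI hxJ
    · exact hxI.elim
    obtain ⟨w, hw, rfl⟩ := hxI
    obtain ⟨v, hv, hvw⟩ := id hxJ
    have ha : a ≤ m := Nat.lt_succ_iff.mp (hIn a List.mem_cons_self)
    have hb : b ≤ m := Nat.lt_succ_iff.mp (hJn b List.mem_cons_self)
    rcases lt_trichotomy a b with hab | rfl | hab
    · rw [← hvw]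
      exact X.mem_filtS_of_memSImage_of_lt hI
        (List.forall_mem_cons.mpr ⟨hab, fun i hi => (List.rel_of_pairwise_cons hI hi).trans hab⟩)
        hb ⟨w, hw, hvw.symm⟩
    · have hwv : w = v := by rw [← X.ds_eq m a ha w, ← hvw, X.ds_eq m a ha v]
      subst hwv
      have hIm : ∀ i ∈ I, i < m := fun i hi => (List.rel_of_pairwise_cons hI hi).trans_le ha
      have hJm : ∀ j ∈ J, j < m := fun j hj => (List.rel_of_pairwise_cons hJ hj).trans_le ha
      exact ⟨m, rfl, a, ha, w, ih (by simpa using hlen) hI.of_cons hJ.of_cons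
        (fun h => hIJ (h ▸ rfl)) hIm hJm hw hv, rfl⟩
    · rw [hlen]
      exact X.mem_filtS_of_memSImage_of_lt hJ
        (List.forall_mem_cons.mpr ⟨hab, fun j hj => (List.rel_of_pairwise_cons hJ hj).trans hab⟩)
        ha hxJ

end SimplicialSpace

/-- Let `X` be (the underlying simplicial set of) a simplicial space,
and let `I` and `J` be distinct admissible sequences with `|I| = |J| = r ≤ n`, with
entries in range.  Then `s_I(X_{n−r}) ∩ s_J(X_{n−r}) ⊆ S^{r+1}(X_n)`: an `n`-simplex
lying in the image of both `s_I` and `s_J` is `(r+1)`-fold degenerate. -/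
theorem sImage_inter_sImage_subset_filtS (X : SimplicialSpace.{u}) (n r : ℕ)
    (hrn : r ≤ n) (I J : List ℕ) (hIlen : I.length = r) (hJlen : J.length = r)
    (hIadm : I.Pairwise (· > ·)) (hJadm : J.Pairwise (· > ·))
    (hIrange : ∀ i ∈ I, i < n) (hJrange : ∀ j ∈ J, j < n) (hIJ : I ≠ J) :
    Set.range (X.sFromTo I n (by omega)) ∩ Set.range (X.sFromTo J n (by omega)) ⊆
      X.filtS (r + 1) n := by
  rintro x ⟨hxI, hxJ⟩
  subst hIlen
  exact X.mem_filtS_of_memSImage_of_memSImage hJlen.symm hIadm hJadm hIJ hIrange hJrange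
    (X.memSImage_of_mem_range_sFromTo hxI) (X.memSImage_of_mem_range_sFromTo hxJ)
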